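/- arXiv:2602.10696 — 6 statements merged into one kernel-verified Lean document; each statement's English description precedes it below -/
import Mathlib

section
/- Fix t ≥ 0 and two items with v_i > v_j > 0, r_i < r_j, and suppose v_i·(r_i − t) < v_j·(r_j − t) with r_i > t. Define φ(λ) = v_i·exp((t − r_i)/λ) − v_j·exp((t − r_j)/λ) for λ > 0. Then φ is increasing on (0, λ_0] and decreasing on [λ_0, ∞), where λ_0 = (r_j − r_i)/(log(v_j(r_j − t)) − log(v_i(r_i − t))), φ(λ) → 0 as λ → 0+, and φ(λ) → v_i − v_j as λ → ∞; consequently there exists exactly one λ* ∈ (0, λ_0] with φ(λ*) = v_i − v_j. -/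
open Filter

/-- Unique-intersection analysis: with `t ≥ 0`, `t < r_i < r_j`, `v_i > v_j > 0` and
`v_i (r_i - t) < v_j (r_j - t)`, the function
`φ λ = v_i exp ((t - r_i)/λ) - v_j exp ((t - r_j)/λ)` is increasing on `(0, λ₀]` and
decreasing on `[λ₀, ∞)` with `λ₀ = (r_j - r_i) / (log (v_j (r_j - t)) - log (v_i (r_i - t)))`,
tends to `0` as `λ → 0⁺`, tends to `v_i - v_j` as `λ → ∞`, and there is exactly one
`λ* ∈ (0, λ₀]` with `φ λ* = v_i - v_j`. -/
theorem phi_unimodal_unique_intersection (t vi vj ri rj : ℝ) (ht : 0 ≤ t)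
    (hvj : 0 < vj) (hvij : vj < vi) (hti : t < ri) (hrij : ri < rj)
    (hslope : vi * (ri - t) < vj * (rj - t)) :
    let φ : ℝ → ℝ := fun l => vi * Real.exp ((t - ri) / l) - vj * Real.exp ((t - rj) / l)
    let l₀ : ℝ := (rj - ri) / (Real.log (vj * (rj - t)) - Real.log (vi * (ri - t)))
    StrictMonoOn φ (Set.Ioc 0 l₀) ∧
    StrictAntiOn φ (Set.Ici l₀) ∧
    Tendsto φ (nhdsWithin 0 (Set.Ioi 0)) (nhds 0) ∧
    Tendsto φ atTop (nhds (vi - vj)) ∧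
    ∃! lstar : ℝ, lstar ∈ Set.Ioc (0 : ℝ) l₀ ∧ φ lstar = vi - vj := by
  intro φ l₀
  have hvi : 0 < vi := lt_trans hvj hvij
  have ha : (0:ℝ) < ri - t := by linarith
  have hbpos : (0:ℝ) < rj - t := by linarith
  have hvia : 0 < vi * (ri - t) := by positivity
  have hvjb : 0 < vj * (rj - t) := by positivity
  have hΔ : 0 < Real.log (vj * (rj - t)) - Real.log (vi * (ri - t)) :=
    sub_pos.2 (Real.log_lt_log hvia hslope)
  have hl₀def : l₀ = (rj - ri) / (Real.log (vj * (rj - t)) - Real.log (vi * (ri - t))) := rfl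
  have hl₀pos : 0 < l₀ := by
    rw [hl₀def]; exact div_pos (by linarith) hΔ
  -- derivative
  set D : ℝ → ℝ := fun l =>
    vi * (Real.exp ((t - ri) / l) * ((t - ri) * -(l^2)⁻¹)) -
    vj * (Real.exp ((t - rj) / l) * ((t - rj) * -(l^2)⁻¹)) with hDdef
  have hderiv : ∀ l : ℝ, l ≠ 0 → HasDerivAt φ (D l) l := by
    intro l hl
    have h1 : HasDerivAt (fun x : ℝ => Real.exp ((t - ri) / x))
        (Real.exp ((t - ri) / l) * ((t - ri) * -(l^2)⁻¹)) l := by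
      have h := ((hasDerivAt_inv hl).const_mul (t - ri)).exp
      simpa [div_eq_mul_inv] using h
    have h2 : HasDerivAt (fun x : ℝ => Real.exp ((t - rj) / x))
        (Real.exp ((t - rj) / l) * ((t - rj) * -(l^2)⁻¹)) l := by
      have h := ((hasDerivAt_inv hl).const_mul (t - rj)).exp
      simpa [div_eq_mul_inv] using h
    exact (h1.const_mul vi).sub (h2.const_mul vj)
  -- rewrite the exponential terms
  have hE1 : ∀ l : ℝ, vi * (ri - t) * Real.exp ((t - ri) / l)
      = Real.exp (Real.log (vi * (ri - t)) + (t - ri) / l) := by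
    intro l; rw [Real.exp_add, Real.exp_log hvia]
  have hE2 : ∀ l : ℝ, vj * (rj - t) * Real.exp ((t - rj) / l)
      = Real.exp (Real.log (vj * (rj - t)) + (t - rj) / l) := by
    intro l; rw [Real.exp_add, Real.exp_log hvjb]
  have hDform : ∀ l : ℝ, l ≠ 0 → D l =
      (vi * (ri - t) * Real.exp ((t - ri) / l) - vj * (rj - t) * Real.exp ((t - rj) / l)) / l^2 := by
    intro l hl
    rw [hDdef]
    field_simp
    ring
  -- sign of D
  have hDpos : ∀ l : ℝ, 0 < l → l < l₀ → 0 < D l := by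
    intro l hl hll₀
    rw [hDform l hl.ne']
    apply div_pos _ (by positivity)
    rw [sub_pos, hE1, hE2]
    apply Real.exp_lt_exp.2
    rw [hl₀def, lt_div_iff₀ hΔ] at hll₀
    have h3 : Real.log (vj * (rj - t)) - Real.log (vi * (ri - t)) < (rj - ri) / l := by
      rw [lt_div_iff₀ hl]; linarith
    have h4 : (t - ri) / l - (t - rj) / l = (rj - ri) / l := by ring
    linarith
  have hDneg : ∀ l : ℝ, l₀ < l → D l < 0 := by
    intro l hll₀
    have hl : 0 < l := lt_trans hl₀pos hll₀
    rw [hDform l hl.ne']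
    apply div_neg_of_neg_of_pos _ (by positivity)
    rw [sub_neg, hE1, hE2]
    apply Real.exp_lt_exp.2
    rw [hl₀def, div_lt_iff₀ hΔ] at hll₀
    have h3 : (rj - ri) / l < Real.log (vj * (rj - t)) - Real.log (vi * (ri - t)) := by
      rw [div_lt_iff₀ hl]; linarith
    have h4 : (t - ri) / l - (t - rj) / l = (rj - ri) / l := by ring
    linarith
  -- continuity away from 0
  have hcont : ∀ l : ℝ, l ≠ 0 → ContinuousAt φ l := fun l hl => (hderiv l hl).continuousAt
  -- monotonicity
  have hmono : StrictMonoOn φ (Set.Ioc 0 l₀) := by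
    apply strictMonoOn_of_deriv_pos (convex_Ioc 0 l₀)
    · exact fun x hx => (hcont x hx.1.ne').continuousWithinAt
    · intro x hx
      rw [interior_Ioc] at hx
      rw [(hderiv x hx.1.ne').deriv]
      exact hDpos x hx.1 hx.2
  have hanti : StrictAntiOn φ (Set.Ici l₀) := by
    apply strictAntiOn_of_deriv_neg (convex_Ici l₀)
    · exact fun x hx => (hcont x (lt_of_lt_of_le hl₀pos hx).ne').continuousWithinAt
    · intro x hx
      rw [interior_Ici] at hx
      rw [(hderiv x (lt_trans hl₀pos hx).ne').deriv]
      exact hDneg x hx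
  -- limit at 0+
  have hlim0 : Tendsto φ (nhdsWithin 0 (Set.Ioi 0)) (nhds 0) := by
    have hinv : Tendsto (fun l : ℝ => l⁻¹) (nhdsWithin 0 (Set.Ioi 0)) atTop :=
      tendsto_inv_nhdsGT_zero
    have h1 : Tendsto (fun l : ℝ => (t - ri) / l) (nhdsWithin 0 (Set.Ioi 0)) atBot := by
      simp only [div_eq_mul_inv]
      exact hinv.const_mul_atTop_of_neg (by linarith)
    have h2 : Tendsto (fun l : ℝ => (t - rj) / l) (nhdsWithin 0 (Set.Ioi 0)) atBot := by
      simp only [div_eq_mul_inv]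
      exact hinv.const_mul_atTop_of_neg (by linarith)
    have e1 := Real.tendsto_exp_atBot.comp h1
    have e2 := Real.tendsto_exp_atBot.comp h2
    have := (e1.const_mul vi).sub (e2.const_mul vj)
    simpa using this
  -- limit at ∞
  have hlimtop : Tendsto φ atTop (nhds (vi - vj)) := by
    have h1 : Tendsto (fun l : ℝ => (t - ri) / l) atTop (nhds 0) := by
      simpa [div_eq_mul_inv] using tendsto_inv_atTop_zero.const_mul (t - ri)
    have h2 : Tendsto (fun l : ℝ => (t - rj) / l) atTop (nhds 0) := by
      simpa [div_eq_mul_inv] using tendsto_inv_atTop_zero.const_mul (t - rj)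
    have e1 := (Real.continuous_exp.tendsto 0).comp h1
    have e2 := (Real.continuous_exp.tendsto 0).comp h2
    have := (e1.const_mul vi).sub (e2.const_mul vj)
    simpa using this
  refine ⟨hmono, hanti, hlim0, hlimtop, ?_⟩
  -- φ l₀ > vi - vj
  have hφl₀ : vi - vj < φ l₀ := by
    have h1 : vi - vj ≤ φ (l₀ + 1) := by
      apply le_of_tendsto hlimtop
      filter_upwards [eventually_ge_atTop (l₀ + 1)] with x hx
      exact hanti.antitoneOn (by simp : l₀ + 1 ∈ Set.Ici l₀)
        (le_trans (by linarith) hx) hx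
    have h2 : φ (l₀ + 1) < φ l₀ :=
      hanti (le_refl l₀) (by simp) (lt_add_one l₀)
    linarith
  -- find small ε with φ ε < vi - vj
  have hev : ∀ᶠ l in nhdsWithin 0 (Set.Ioi 0),
      φ l < vi - vj ∧ l < l₀ ∧ 0 < l := by
    have hA : ∀ᶠ l in nhdsWithin 0 (Set.Ioi 0), φ l < vi - vj :=
      hlim0.eventually (Filter.Tendsto.eventually_lt_const (by linarith) tendsto_id)
    have hB : ∀ᶠ l in nhdsWithin 0 (Set.Ioi 0), l < l₀ :=
      eventually_nhdsWithin_of_eventually_nhds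
        (Filter.Tendsto.eventually_lt_const hl₀pos tendsto_id)
    have hC : ∀ᶠ l in nhdsWithin (0:ℝ) (Set.Ioi 0), 0 < l :=
      eventually_mem_nhdsWithin
    exact hA.and (hB.and hC)
  obtain ⟨ε, hφε, hεl₀, hεpos⟩ := hev.exists
  -- IVT on [ε, l₀]
  have hconts : ContinuousOn φ (Set.Icc ε l₀) := fun x hx =>
    (hcont x (lt_of_lt_of_le hεpos hx.1).ne').continuousWithinAt
  have hmem : vi - vj ∈ Set.Icc (φ ε) (φ l₀) := ⟨le_of_lt hφε, le_of_lt hφl₀⟩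
  obtain ⟨lstar, hlstar, hφlstar⟩ :=
    intermediate_value_Icc (le_of_lt hεl₀) hconts hmem
  refine ⟨lstar, ⟨⟨lt_of_lt_of_le hεpos hlstar.1, hlstar.2⟩, hφlstar⟩, ?_⟩
  rintro y ⟨hy, hφy⟩
  exact hmono.injOn hy ⟨lt_of_lt_of_le hεpos hlstar.1, hlstar.2⟩ (by rw [hφy, hφlstar])
end

section
/- Under the MNL model with attraction parameters v_0 = 1 and v_i > 0 for i ∈ [N], uniform revenues r_i = r_max for all i ∈ [N], and constant KL-robust radius ρ ≥ 0, the robust expected revenue of an assortment S equals sup_{λ ≥ 0} { −λ·log( exp(−r_max/λ) + (1 − exp(−r_max/λ))/(1 + Σ_{i∈S} v_i) ) − λρ }, and this quantity is nondecreasing in Σ_{i∈S} v_i. Consequently, among all assortments of size at most K, the robust expected revenue is maximized by the set of the K items with the largest attraction parameters v_i. -/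
/-!
With all item revenues equal to `rmax`, the MNL expectation of `exp (-r/λ)` depends on the
assortment only through the no-purchase probability `1 / (1 + ∑_{i ∈ S} v i)`, which gives the
simplified dual objective. For each `λ` this objective increases with the total attraction, since
the argument of the logarithm decreases towards `exp (-rmax/λ)`; the objective is bounded by
`rmax`, so the inequality survives taking suprema. Finally, the top-`K` assortment has the
largest total attraction among assortments of at most `K` items, since each item of `S` outside
it weighs at most as much as each of its items outside `S`, and there are at least as many of the
latter.
-/

open Finset

/-- Supremum over dual variables `λ ≥ 0` of a real-valued function. -/
noncomputable def dualSup (f : ℝ → ℝ) : ℝ := sSup (f '' Set.Ici (0 : ℝ))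

open Real

theorem dualSup_congr {f g : ℝ → ℝ} (h : Set.EqOn f g (Set.Ici 0)) : dualSup f = dualSup g := by
  rw [dualSup, dualSup, h.image_eq]

theorem dualSup_mono {f g : ℝ → ℝ} (hfg : ∀ l, 0 ≤ l → f l ≤ g l)
    (hg : BddAbove (g '' Set.Ici 0)) : dualSup f ≤ dualSup g :=
  csSup_le ⟨f 0, 0, Set.self_mem_Ici, rfl⟩ fun _ ⟨l, hl, hfl⟩ =>
    hfl ▸ le_csSup_of_le hg ⟨l, hl, rfl⟩ (hfg l hl)

theorem sum_le_sum_of_card_le_of_forall_sdiff_le {ι M : Type*} [DecidableEq ι]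
    [AddCommMonoid M] [LinearOrder M] [IsOrderedAddMonoid M] {S T : Finset ι} {f : ι → M}
    (hcard : #S ≤ #T) (hT : ∀ j ∈ T, 0 ≤ f j) (hle : ∀ i ∈ S \ T, ∀ j ∈ T \ S, f i ≤ f j) :
    ∑ i ∈ S, f i ≤ ∑ i ∈ T, f i := by
  rw [← sum_inter_add_sum_sdiff S T, ← sum_inter_add_sum_sdiff T S, inter_comm]
  gcongr ∑ i ∈ T ∩ S, f i + ?_
  rcases (T \ S).eq_empty_or_nonempty with hTS | hTS
  · have hST : S \ T = ∅ := by
      simpa [hTS] using card_sdiff_le_card_sdiff_iff.mpr hcard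
    simp [hST, hTS]
  · obtain ⟨m, hm, hm_min⟩ := exists_min_image (T \ S) f hTS
    calc ∑ i ∈ S \ T, f i ≤ #(S \ T) • f m := sum_le_card_nsmul _ _ _ fun i hi => hle i hi m hm
      _ ≤ #(T \ S) • f m :=
        nsmul_le_nsmul_left (hT m (mem_sdiff.mp hm).1) (card_sdiff_le_card_sdiff_iff.mpr hcard)
      _ ≤ ∑ i ∈ T \ S, f i := card_nsmul_le_sum _ _ _ hm_min

theorem mnl_expectation_exp_uniform {v : ℕ → ℝ} {S : Finset ℕ} (rmax l : ℝ) (hv0 : v 0 = 1)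
    (h0 : 0 ∉ S) (hS : 1 + ∑ i ∈ S, v i ≠ 0) :
    ∑ i ∈ insert 0 S, (v i / ∑ j ∈ insert 0 S, v j) *
        exp (-(if i = 0 then 0 else rmax) / l) =
      exp (-rmax / l) + (1 - exp (-rmax / l)) / (1 + ∑ i ∈ S, v i) := by
  have hitem : ∀ i ∈ S, (v i / (1 + ∑ j ∈ S, v j)) * exp (-(if i = 0 then 0 else rmax) / l) =
      v i * exp (-rmax / l) / (1 + ∑ j ∈ S, v j) := fun i hi => by
    rw [if_neg (ne_of_mem_of_not_mem hi h0), div_mul_eq_mul_div]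
  rw [sum_insert h0, sum_insert h0, hv0, sum_congr rfl hitem, ← sum_div, ← sum_mul, if_pos rfl,
    neg_zero, zero_div, exp_zero]
  field_simp
  ring

/-- The simplified dual objective at `λ = l` for an assortment of total attraction `s`. -/
noncomputable def uniformDualObjective (rmax ρ s l : ℝ) : ℝ :=
  -l * log (exp (-rmax / l) + (1 - exp (-rmax / l)) / (1 + s)) - l * ρ

theorem dualSup_mnl_uniform_eq {v : ℕ → ℝ} {S : Finset ℕ} (rmax ρ : ℝ) (hv0 : v 0 = 1)
    (h0 : 0 ∉ S) (hS : 1 + ∑ i ∈ S, v i ≠ 0) :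
    dualSup (fun l => -l * log (∑ i ∈ insert 0 S, (v i / ∑ j ∈ insert 0 S, v j) *
        exp (-(if i = 0 then 0 else rmax) / l)) - l * ρ) =
      dualSup (uniformDualObjective rmax ρ (∑ i ∈ S, v i)) :=
  dualSup_congr fun l _ => by
    simp only [uniformDualObjective, mnl_expectation_exp_uniform rmax l hv0 h0 hS]

section UniformDualObjective

variable {rmax ρ s s' l : ℝ}

theorem exp_neg_div_le_one (hr : 0 ≤ rmax) (hl : 0 ≤ l) : exp (-rmax / l) ≤ 1 :=
  exp_le_one_iff.mpr (div_nonpos_of_nonpos_of_nonneg (neg_nonpos.mpr hr) hl)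

theorem uniformDualObjective_le (hr : 0 ≤ rmax) (hρ : 0 ≤ ρ) (hs : 0 ≤ s) (hl : 0 ≤ l) :
    uniformDualObjective rmax ρ s l ≤ rmax := by
  rcases hl.eq_or_lt with rfl | hl
  · simpa [uniformDualObjective] using hr
  set e := exp (-rmax / l)
  have hlog : -rmax / l ≤ log (e + (1 - e) / (1 + s)) := by
    rw [← log_exp (-rmax / l)]
    refine log_le_log (exp_pos _) (le_add_of_nonneg_right (div_nonneg ?_ (by linarith)))
    linarith [exp_neg_div_le_one hr hl.le]
  have hbound : -l * log (e + (1 - e) / (1 + s)) ≤ -l * (-rmax / l) :=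
    mul_le_mul_of_nonpos_left hlog (by linarith)
  have hcancel : -l * (-rmax / l) = rmax := by field_simp
  unfold uniformDualObjective
  linarith [mul_nonneg hl.le hρ]

theorem uniformDualObjective_le_of_le (hr : 0 ≤ rmax) (hs : 0 ≤ s) (hss : s ≤ s') (hl : 0 ≤ l) :
    uniformDualObjective rmax ρ s l ≤ uniformDualObjective rmax ρ s' l := by
  set e := exp (-rmax / l)
  have he : 0 ≤ 1 - e := by linarith [exp_neg_div_le_one hr hl]
  have hpos : 0 < e + (1 - e) / (1 + s') :=
    add_pos_of_pos_of_nonneg (exp_pos _) (div_nonneg he (by linarith))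
  have hlog : log (e + (1 - e) / (1 + s')) ≤ log (e + (1 - e) / (1 + s)) := by
    gcongr
  unfold uniformDualObjective
  linarith [mul_le_mul_of_nonpos_left hlog (neg_nonpos.mpr hl)]

theorem dualSup_uniformDualObjective_mono (hr : 0 ≤ rmax) (hρ : 0 ≤ ρ) (hs : 0 ≤ s)
    (hss : s ≤ s') :
    dualSup (uniformDualObjective rmax ρ s) ≤ dualSup (uniformDualObjective rmax ρ s') :=
  dualSup_mono (fun _ hl => uniformDualObjective_le_of_le hr hs hss hl)
    ⟨rmax, fun _ ⟨_, hl, h⟩ => h ▸ uniformDualObjective_le hr hρ (hs.trans hss) hl⟩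

end UniformDualObjective

/-- Under the MNL model with `v 0 = 1`, `v i > 0` for `i ∈ [N]`, uniform revenues
`r i = r_max` on items (`r 0 = 0`), and constant KL-robust radius `ρ ≥ 0`, the dual
representation of the robust expected revenue of an assortment `S` simplifies to
`sup_{λ ≥ 0} {-λ log (exp (-r_max/λ) + (1 - exp (-r_max/λ)) / (1 + ∑_{i ∈ S} v i)) - λρ}`;
this quantity is nondecreasing in `∑_{i ∈ S} v i`; and consequently, among all
assortments of size at most `K`, it is maximized by the `K` items with the largest
attraction parameters. -/
theorem uniform_revenue_robust_optimal (N K : ℕ) (v : ℕ → ℝ) (rmax ρ : ℝ)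
    (hv0 : v 0 = 1) (hv : ∀ i ∈ Finset.Icc 1 N, 0 < v i) (hr : 0 < rmax) (hρ : 0 ≤ ρ) :
    -- (1) simplification of the dual representation under uniform revenues
    (∀ S : Finset ℕ, S ⊆ Finset.Icc 1 N →
      dualSup (fun l =>
          -l * Real.log (∑ i ∈ insert 0 S,
              (v i / ∑ j ∈ insert 0 S, v j) *
                Real.exp (-(if i = 0 then 0 else rmax) / l)) - l * ρ) =
        dualSup (fun l =>
          -l * Real.log (Real.exp (-rmax / l) +
              (1 - Real.exp (-rmax / l)) / (1 + ∑ i ∈ S, v i)) - l * ρ)) ∧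
    -- (2) the simplified value is nondecreasing in the total attraction
    (∀ s s' : ℝ, 0 ≤ s → s ≤ s' →
      dualSup (fun l =>
          -l * Real.log (Real.exp (-rmax / l) + (1 - Real.exp (-rmax / l)) / (1 + s)) - l * ρ) ≤
        dualSup (fun l =>
          -l * Real.log (Real.exp (-rmax / l) + (1 - Real.exp (-rmax / l)) / (1 + s')) - l * ρ)) ∧
    -- (3) the top-K assortment is optimal among assortments of cardinality at most K
    (∀ Sstar : Finset ℕ, Sstar ⊆ Finset.Icc 1 N → Sstar.card = K →
      (∀ i ∈ Finset.Icc 1 N, i ∉ Sstar → ∀ j ∈ Sstar, v i ≤ v j) →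
      ∀ S : Finset ℕ, S ⊆ Finset.Icc 1 N → S.card ≤ K →
        dualSup (fun l =>
            -l * Real.log (∑ i ∈ insert 0 S,
                (v i / ∑ j ∈ insert 0 S, v j) *
                  Real.exp (-(if i = 0 then 0 else rmax) / l)) - l * ρ) ≤
          dualSup (fun l =>
              -l * Real.log (∑ i ∈ insert 0 Sstar,
                  (v i / ∑ j ∈ insert 0 Sstar, v j) *
                    Real.exp (-(if i = 0 then 0 else rmax) / l)) - l * ρ)) := by
  have hsum_nonneg : ∀ S ⊆ Icc 1 N, 0 ≤ ∑ i ∈ S, v i := fun S hS =>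
    sum_nonneg fun i hi => (hv i (hS hi)).le
  have hreduce : ∀ S ⊆ Icc 1 N, _ := fun S hS =>
    dualSup_mnl_uniform_eq (S := S) rmax ρ hv0 (fun h => by simpa using hS h)
      (by linarith [hsum_nonneg S hS])
  refine ⟨hreduce, fun _ _ hs hss => dualSup_uniformDualObjective_mono hr.le hρ hs hss,
    fun T hT hTK htop S hS hSK => ?_⟩
  have htotal : ∑ i ∈ S, v i ≤ ∑ i ∈ T, v i :=
    sum_le_sum_of_card_le_of_forall_sdiff_le (hTK ▸ hSK) (fun j hj => (hv j (hT hj)).le)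
      fun i hi j hj => htop i (hS (mem_sdiff.mp hi).1) (mem_sdiff.mp hi).2 j (mem_sdiff.mp hj).1
  rw [hreduce S hS, hreduce T hT]
  exact dualSup_uniformDualObjective_mono hr.le hρ (hsum_nonneg S hS) htotal
end

section
/- Let S be a finite set, a_j > 0 values, w_j' ≤ w_j positive weights for j ∈ S, and c ∈ ℝ with Σ_j w_j' − c > 0. If for every j ∈ S with w_j > w_j', a_j ≤ (Σ_i w_i' a_i)/(Σ_i w_i' − c), then (Σ_j w_j a_j)/(Σ_j w_j − c) ≤ (Σ_j w_j' a_j)/(Σ_j w_j' − c). -/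
open Finset

/-- Abstract monotonicity lemma with a shifted denominator: for a finite set `S`,
positive values `a j`, positive weights `w' j ≤ w j`, and `c : ℝ` with
`∑ w' - c > 0`, if `a j ≤ (∑ w' a) / (∑ w' - c)` for every `j` with `w' j < w j`,
then `(∑ w a) / (∑ w - c) ≤ (∑ w' a) / (∑ w' - c)`. -/
theorem weighted_avg_shifted_mono {ι : Type*} (S : Finset ι) (a w w' : ι → ℝ) (c : ℝ)
    (ha : ∀ j ∈ S, 0 < a j) (hw' : ∀ j ∈ S, 0 < w' j) (hww' : ∀ j ∈ S, w' j ≤ w j)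
    (hden : 0 < (∑ j ∈ S, w' j) - c)
    (hcond : ∀ j ∈ S, w' j < w j →
      a j ≤ (∑ i ∈ S, w' i * a i) / ((∑ i ∈ S, w' i) - c)) :
    (∑ j ∈ S, w j * a j) / ((∑ j ∈ S, w j) - c) ≤
      (∑ j ∈ S, w' j * a j) / ((∑ j ∈ S, w' j) - c) := by
  set A := ∑ i ∈ S, w' i * a i with hA
  set B := (∑ j ∈ S, w' j) - c with hB
  set r := A / B with hr
  have hBne : B ≠ 0 := ne_of_gt hden
  have hsumle : (∑ j ∈ S, w' j) ≤ ∑ j ∈ S, w j := Finset.sum_le_sum hww'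
  have hBt : 0 < (∑ j ∈ S, w j) - c := by
    have := sub_le_sub_right hsumle c
    linarith
  have key : ∀ j ∈ S, (w j - w' j) * a j ≤ (w j - w' j) * r := by
    intro j hj
    rcases eq_or_lt_of_le (hww' j hj) with h | h
    · simp [← h]
    · exact mul_le_mul_of_nonneg_left (hcond j hj h) (by linarith)
  have hnum : (∑ j ∈ S, w j * a j) ≤ A + ((∑ j ∈ S, w j) - (∑ j ∈ S, w' j)) * r := by
    have h1 : (∑ j ∈ S, w j * a j) = A + ∑ j ∈ S, (w j - w' j) * a j := by
      rw [hA, ← Finset.sum_add_distrib]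
      apply Finset.sum_congr rfl
      intro j hj; ring
    have h2 : (∑ j ∈ S, (w j - w' j) * a j) ≤ ∑ j ∈ S, (w j - w' j) * r :=
      Finset.sum_le_sum key
    have h3 : (∑ j ∈ S, (w j - w' j) * r) = ((∑ j ∈ S, w j) - (∑ j ∈ S, w' j)) * r := by
      rw [← Finset.sum_mul, Finset.sum_sub_distrib]
    linarith [h1, h2, h3 ▸ h2]
  have hrB : r * B = A := div_mul_cancel₀ A hBne
  have heq : A + ((∑ j ∈ S, w j) - (∑ j ∈ S, w' j)) * r = r * ((∑ j ∈ S, w j) - c) := by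
    have : ((∑ j ∈ S, w j) - c) = B + ((∑ j ∈ S, w j) - (∑ j ∈ S, w' j)) := by
      rw [hB]; ring
    rw [this, mul_add, hrB]; ring
  calc (∑ j ∈ S, w j * a j) / ((∑ j ∈ S, w j) - c)
      ≤ (r * ((∑ j ∈ S, w j) - c)) / ((∑ j ∈ S, w j) - c) := by
        rw [div_le_div_iff_of_pos_right hBt] <;> try skip
        exact heq ▸ hnum
    _ = r := mul_div_cancel_right₀ r (ne_of_gt hBt)
end

section
/- Let K, n_min ∈ ℕ and ε > 0, and for m ∈ {0, 1, …, K} define F(m) = sup_{λ ≥ 0} { −λ·log( (1 + e^{−r_max/λ}·(1 + m·ε)) / (2 + m·ε) ) − λρ } for fixed r_max > 0 and ρ ≥ 0. Suppose K·ε ≤ 1 so that 1 + m·ε ∈ [1, 2]. Then for any m ≤ K and any λ* attaining (or approaching) the supremum at level m, F(K) − F(m) ≥ (ε/18)·λ*·(1 − e^{−r_max/λ*})·(K − m). -/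
lemma one_sub_inv_le_log (x : ℝ) (hx : 0 < x) : 1 - 1/x ≤ Real.log x := by
  have h := Real.log_le_sub_one_of_pos (x := 1/x) (by positivity)
  rw [Real.log_div one_ne_zero (ne_of_gt hx), Real.log_one] at h
  linarith

lemma key_log (t a b : ℝ) (ht0 : 0 < t) (ht1 : t ≤ 1) (ha : 0 ≤ a) (hab : a ≤ b)
    (hb : b ≤ 1) :
    (b - a) * (1 - t) / 9 ≤
      Real.log ((1 + t * (1 + a)) / (2 + a)) - Real.log ((1 + t * (1 + b)) / (2 + b)) := by
  have hXa : (0:ℝ) < 1 + t * (1 + a) := by nlinarith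
  have hXb : (0:ℝ) < 1 + t * (1 + b) := by nlinarith
  have h2a : (0:ℝ) < 2 + a := by linarith
  have h2b : (0:ℝ) < 2 + b := by linarith
  set X := (1 + t * (1 + a)) * (2 + b) with hX
  set Y := (1 + t * (1 + b)) * (2 + a) with hY
  have hXpos : 0 < X := by positivity
  have hYpos : 0 < Y := by positivity
  have hdiff : X - Y = (b - a) * (1 - t) := by ring
  have hrw : Real.log ((1 + t * (1 + a)) / (2 + a)) - Real.log ((1 + t * (1 + b)) / (2 + b))
      = Real.log (X / Y) := by
    rw [Real.log_div (ne_of_gt hXa) (ne_of_gt h2a),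
        Real.log_div (ne_of_gt hXb) (ne_of_gt h2b),
        Real.log_div (ne_of_gt hXpos) (ne_of_gt hYpos),
        Real.log_mul (ne_of_gt hXa) (ne_of_gt h2b),
        Real.log_mul (ne_of_gt hXb) (ne_of_gt h2a)]
    ring
  rw [hrw]
  have hlog : 1 - Y / X ≤ Real.log (X / Y) := by
    have := one_sub_inv_le_log (X / Y) (by positivity)
    rwa [one_div_div] at this
  have h9 : X ≤ 9 := by nlinarith
  have hnum : 0 ≤ X - Y := by rw [hdiff]; nlinarith
  have h1 : (X - Y) / 9 ≤ (X - Y) / X := div_le_div_of_nonneg_left hnum hXpos h9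
  have h2 : 1 - Y / X = (X - Y) / X := by field_simp
  calc (b - a) * (1 - t) / 9 = (X - Y) / 9 := by rw [hdiff]
    _ ≤ (X - Y) / X := h1
    _ = 1 - Y / X := h2.symm
    _ ≤ Real.log (X / Y) := hlog

/-- Lower-bound gap estimate for the hard instances: let
`F m = sup_{λ ≥ 0} {-λ log ((1 + exp (-r_max/λ) * (1 + m ε)) / (2 + m ε)) - λ ρ}` with
`r_max > 0`, `ρ ≥ 0`, `ε > 0`, and `K ε ≤ 1` (so `1 + m ε ∈ [1, 2]` for `m ≤ K`).
Then for every `m ≤ K` and every `λ* ≥ 0` attaining the supremum at level `m`,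
`F K - F m ≥ (ε / 18) * λ* * (1 - exp (-r_max/λ*)) * (K - m)`. -/
theorem hard_instance_gap (K : ℕ) (rmax ε ρ : ℝ) (hr : 0 < rmax) (hε : 0 < ε)
    (hρ : 0 ≤ ρ) (hKε : (K : ℝ) * ε ≤ 1) :
    ∀ m : ℕ, m ≤ K → ∀ lstar : ℝ, 0 ≤ lstar →
      dualSup (fun l =>
          -l * Real.log ((1 + Real.exp (-rmax / l) * (1 + (m : ℝ) * ε)) / (2 + (m : ℝ) * ε)) -
            l * ρ) =
        -lstar * Real.log
            ((1 + Real.exp (-rmax / lstar) * (1 + (m : ℝ) * ε)) / (2 + (m : ℝ) * ε)) -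
          lstar * ρ →
      (ε / 18) * lstar * (1 - Real.exp (-rmax / lstar)) * ((K : ℝ) - (m : ℝ)) ≤
        dualSup (fun l =>
            -l * Real.log ((1 + Real.exp (-rmax / l) * (1 + (K : ℝ) * ε)) / (2 + (K : ℝ) * ε)) -
              l * ρ) -
          dualSup (fun l =>
            -l * Real.log ((1 + Real.exp (-rmax / l) * (1 + (m : ℝ) * ε)) / (2 + (m : ℝ) * ε)) -
              l * ρ) := by
  intro m hm lstar hl hsup
  have ht0 : 0 < Real.exp (-rmax / lstar) := Real.exp_pos _
  have ht1 : Real.exp (-rmax / lstar) ≤ 1 := by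
    rw [Real.exp_le_one_iff]
    exact div_nonpos_of_nonpos_of_nonneg (by linarith) hl
  have hmK : (m : ℝ) ≤ (K : ℝ) := Nat.cast_le.mpr hm
  have hab : (m : ℝ) * ε ≤ (K : ℝ) * ε := mul_le_mul_of_nonneg_right hmK hε.le
  -- boundedness of the K-level dual set
  have hbdd : BddAbove ((fun l =>
      -l * Real.log ((1 + Real.exp (-rmax / l) * (1 + (K : ℝ) * ε)) / (2 + (K : ℝ) * ε)) -
        l * ρ) '' Set.Ici (0 : ℝ)) := by
    refine ⟨2 * rmax, ?_⟩
    rintro x ⟨l, hl0, rfl⟩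
    simp only [Set.mem_Ici] at hl0
    dsimp only
    rcases eq_or_lt_of_le hl0 with h0 | h0
    · rw [← h0]
      norm_num
      linarith
    · set s := Real.exp (-rmax / l) with hs
      have hs0 : 0 < s := Real.exp_pos _
      have hs1 : s ≤ 1 := by
        rw [hs, Real.exp_le_one_iff]
        exact div_nonpos_of_nonpos_of_nonneg (by linarith) hl0
      have hb0 : (0:ℝ) ≤ (K : ℝ) * ε := by positivity
      have hN : (0:ℝ) < 1 + s * (1 + (K : ℝ) * ε) := by nlinarith
      have h2b : (0:ℝ) < 2 + (K : ℝ) * ε := by linarith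
      have hxpos : (0:ℝ) < (1 + s * (1 + (K : ℝ) * ε)) / (2 + (K : ℝ) * ε) := by positivity
      have hlogx := one_sub_inv_le_log _ hxpos
      have hinv : 1 / ((1 + s * (1 + (K : ℝ) * ε)) / (2 + (K : ℝ) * ε)) - 1
          = (1 + (K : ℝ) * ε) * (1 - s) / (1 + s * (1 + (K : ℝ) * ε)) := by
        field_simp
        ring
      have hfrac : (1 + (K : ℝ) * ε) * (1 - s) / (1 + s * (1 + (K : ℝ) * ε))
          ≤ (1 + (K : ℝ) * ε) * (1 - s) := by
        apply div_le_self (by nlinarith) (by nlinarith)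
      have hsl : (1 - s) * l ≤ rmax := by
        have h := Real.add_one_le_exp (-rmax / l)
        rw [← hs] at h
        have h2 : (1 - s) ≤ rmax / l := by rw [neg_div] at h; linarith
        calc (1 - s) * l ≤ (rmax / l) * l := mul_le_mul_of_nonneg_right h2 hl0
          _ = rmax := by field_simp
      have hmono : -l * Real.log ((1 + s * (1 + (K : ℝ) * ε)) / (2 + (K : ℝ) * ε))
          ≤ l * ((1 + (K : ℝ) * ε) * (1 - s)) := by
        have h1 : -Real.log ((1 + s * (1 + (K : ℝ) * ε)) / (2 + (K : ℝ) * ε))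
            ≤ (1 + (K : ℝ) * ε) * (1 - s) := by
          linarith [hlogx, hinv, hfrac]
        calc -l * Real.log ((1 + s * (1 + (K : ℝ) * ε)) / (2 + (K : ℝ) * ε))
            = l * (-Real.log ((1 + s * (1 + (K : ℝ) * ε)) / (2 + (K : ℝ) * ε))) := by ring
          _ ≤ l * ((1 + (K : ℝ) * ε) * (1 - s)) := mul_le_mul_of_nonneg_left h1 hl0
      have hlast : l * ((1 + (K : ℝ) * ε) * (1 - s)) ≤ 2 * rmax := by
        nlinarith [mul_nonneg (sub_nonneg.mpr hs1) hl0,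
          mul_nonneg hb0 (mul_nonneg (sub_nonneg.mpr hs1) hl0)]
      have hρl : 0 ≤ l * ρ := mul_nonneg hl0 hρ
      linarith
  have hFK : -lstar * Real.log
        ((1 + Real.exp (-rmax / lstar) * (1 + (K : ℝ) * ε)) / (2 + (K : ℝ) * ε)) - lstar * ρ
      ≤ dualSup (fun l =>
        -l * Real.log ((1 + Real.exp (-rmax / l) * (1 + (K : ℝ) * ε)) / (2 + (K : ℝ) * ε)) -
          l * ρ) :=
    le_csSup hbdd (Set.mem_image_of_mem _ (Set.mem_Ici.mpr hl))
  rw [hsup]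
  have hkey := key_log (Real.exp (-rmax / lstar)) ((m : ℝ) * ε) ((K : ℝ) * ε) ht0 ht1
    (by positivity) hab hKε
  have hmul := mul_le_mul_of_nonneg_left hkey hl
  have hKm : (0:ℝ) ≤ (K : ℝ) - (m : ℝ) := by linarith
  have h1t : (0:ℝ) ≤ 1 - Real.exp (-rmax / lstar) := by linarith
  nlinarith [mul_nonneg (mul_nonneg (mul_nonneg hl hε.le) hKm) h1t]
end

section
/- Let S be a finite set with 0 ∈ S, 0 < v_i'' ≤ v_i for all i ∈ S. Then Σ_{i∈S} | v_i''/(Σ_{j∈S} v_j'') − v_i/(Σ_{j∈S} v_j) | ≤ 2·(Σ_{i∈S} (v_i − v_i'')) / (Σ_{i∈S} v_i''). -/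
open Finset

/-! Write `A = ∑ v''` and `B = ∑ v`, so `A ≤ B`. Splitting
`v'' i / A - v i / B = v'' i * (1 / A - 1 / B) - (v i - v'' i) / B`
into two nonnegative parts, the sum of the first is `(B - A) / B`, and so is the sum of the second.
Hence the left side is at most `2 (B - A) / B ≤ 2 (B - A) / A`. -/

section

variable {K : Type*} [Field K] [LinearOrder K] [IsStrictOrderedRing K]

theorem abs_div_sub_div_le_of_le {p q A B : K} (hp : 0 ≤ p) (hpq : p ≤ q) (hA : 0 < A)
    (hAB : A ≤ B) : |p / A - q / B| ≤ p * (1 / A - 1 / B) + (q - p) / B := by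
  have hB : 0 < B := hA.trans_le hAB
  have hsplit : p / A - q / B = p * (1 / A - 1 / B) - (q - p) / B := by ring
  have hfirst : 0 ≤ p * (1 / A - 1 / B) :=
    mul_nonneg hp (sub_nonneg.mpr (one_div_le_one_div_of_le hA hAB))
  have hsecond : 0 ≤ (q - p) / B := div_nonneg (sub_nonneg.mpr hpq) hB.le
  calc |p / A - q / B| ≤ |p * (1 / A - 1 / B)| + |(q - p) / B| := hsplit ▸ abs_sub _ _
    _ = p * (1 / A - 1 / B) + (q - p) / B := by rw [abs_of_nonneg hfirst, abs_of_nonneg hsecond]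

theorem sum_abs_div_sum_sub_div_sum_le {ι : Type*} (S : Finset ι) {p q : ι → K}
    (hp : ∀ i ∈ S, 0 ≤ p i) (hpq : ∀ i ∈ S, p i ≤ q i) (hA : 0 < ∑ j ∈ S, p j) :
    ∑ i ∈ S, |p i / (∑ j ∈ S, p j) - q i / (∑ j ∈ S, q j)| ≤
      2 * (∑ j ∈ S, q j - ∑ j ∈ S, p j) / ∑ j ∈ S, q j := by
  set A := ∑ j ∈ S, p j
  set B := ∑ j ∈ S, q j
  have hAB : A ≤ B := sum_le_sum hpq
  have hB : 0 < B := hA.trans_le hAB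
  calc ∑ i ∈ S, |p i / A - q i / B|
      ≤ ∑ i ∈ S, (p i * (1 / A - 1 / B) + (q i - p i) / B) :=
        sum_le_sum fun i hi => abs_div_sub_div_le_of_le (hp i hi) (hpq i hi) hA hAB
    _ = A * (1 / A - 1 / B) + (B - A) / B := by
        rw [sum_add_distrib, ← sum_mul, ← sum_div, sum_sub_distrib]
    _ = 2 * (B - A) / B := by field_simp; ring

end

/-- Total-variation-style bound: for a finite set `S` containing `0` and positive weights
`v'' i ≤ v i`,
`∑_{i ∈ S} |v'' i / ∑ v'' - v i / ∑ v| ≤ 2 * (∑_{i ∈ S} (v i - v'' i)) / (∑_{i ∈ S} v'' i)`. -/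
theorem tv_bound_of_le (S : Finset ℕ) (h0 : 0 ∈ S) (v v'' : ℕ → ℝ)
    (hv'' : ∀ i ∈ S, 0 < v'' i) (hle : ∀ i ∈ S, v'' i ≤ v i) :
    ∑ i ∈ S, |v'' i / (∑ j ∈ S, v'' j) - v i / (∑ j ∈ S, v j)| ≤
      2 * (∑ i ∈ S, (v i - v'' i)) / (∑ i ∈ S, v'' i) := by
  have hA : 0 < ∑ j ∈ S, v'' j := sum_pos hv'' ⟨0, h0⟩
  have hAB : ∑ j ∈ S, v'' j ≤ ∑ j ∈ S, v j := sum_le_sum hle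
  rw [sum_sub_distrib]
  calc _ ≤ 2 * (∑ j ∈ S, v j - ∑ j ∈ S, v'' j) / ∑ j ∈ S, v j :=
        sum_abs_div_sum_sub_div_sum_le S (fun i hi => (hv'' i hi).le) hle hA
    _ ≤ 2 * (∑ j ∈ S, v j - ∑ j ∈ S, v'' j) / ∑ j ∈ S, v'' j :=
        div_le_div_of_nonneg_left (by linarith) hA hAB
end

section
/- Let S be a finite set with 0 ∈ S, values a_i ∈ (0, 1] with a_0 = 1, and positive weights v_i'' ≤ v_i for i ∈ S. Then (Σ_i v_i'' a_i / Σ_i v_i'') · (Σ_i v_i / Σ_i v_i a_i) − 1 ≤ max_{i∈S} { (v_i''/Σ_j v_j'' − v_i/Σ_j v_j) · (Σ_j v_j)/v_i } ≤ (Σ_{i∈S}(v_i − v_i'')) / (Σ_{i∈S} v_i''). -/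
open Finset

/-
Writing `Sᵥ = ∑ v` and `S'' = ∑ v''`, the `i`-th term of the maximum equals
`(v'' i / v i) * (Sᵥ / S'') - 1`, so the maximum is `m * (Sᵥ / S'') - 1` with
`m = max (v'' i / v i)`. The first inequality is then `∑ v'' a ≤ m * ∑ v a`, a termwise
comparison, and the second is `m ≤ 1`.
-/

theorem share_gap_mul_div_eq {K : Type*} [Field K] {x'' x c'' c : K} (hx : x ≠ 0)
    (hc'' : c'' ≠ 0) (hc : c ≠ 0) :
    (x'' / c'' - x / c) * c / x = x'' / x * (c / c'') - 1 := by
  field_simp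

section

variable {ι K : Type*} [Field K] [LinearOrder K] [IsStrictOrderedRing K]

theorem Finset.sum_le_sup'_div_mul_sum (s : Finset ι) (hs : s.Nonempty) (f g : ι → K)
    (hg : ∀ i ∈ s, 0 < g i) :
    ∑ i ∈ s, f i ≤ s.sup' hs (fun i => f i / g i) * ∑ i ∈ s, g i := by
  rw [mul_sum]
  refine sum_le_sum fun i hi => ?_
  calc f i = f i / g i * g i := (div_mul_cancel₀ _ (hg i hi).ne').symm
    _ ≤ _ := mul_le_mul_of_nonneg_right (le_sup' (fun i => f i / g i) hi) (hg i hi).le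

theorem Finset.sup'_share_gap_eq (s : Finset ι) (hs : s.Nonempty) (v'' v : ι → K) {c'' c : K}
    (hc'' : 0 < c'') (hc : 0 < c) (hv : ∀ i ∈ s, v i ≠ 0) :
    s.sup' hs (fun i => (v'' i / c'' - v i / c) * c / v i) =
      s.sup' hs (fun i => v'' i / v i) * (c / c'') - 1 := by
  rw [sub_eq_add_neg, sup'_mul₀ (div_pos hc hc'').le, sup'_add]
  exact sup'_congr hs rfl fun i hi => by
    rw [share_gap_mul_div_eq (hv i hi) hc''.ne' hc.ne', sub_eq_add_neg]

end

theorem ratio_bound_chain_general (S : Finset ℕ) (h0 : 0 ∈ S) (a v v'' : ℕ → ℝ)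
    (ha : ∀ i ∈ S, 0 < a i ∧ a i ≤ 1)
    (hv'' : ∀ i ∈ S, 0 < v'' i) (hle : ∀ i ∈ S, v'' i ≤ v i) :
    ((∑ i ∈ S, v'' i * a i) / (∑ i ∈ S, v'' i)) *
        ((∑ i ∈ S, v i) / (∑ i ∈ S, v i * a i)) - 1 ≤
      S.sup' ⟨0, h0⟩
        (fun i => (v'' i / (∑ j ∈ S, v'' j) - v i / (∑ j ∈ S, v j)) * (∑ j ∈ S, v j) / v i) ∧
    S.sup' ⟨0, h0⟩
        (fun i => (v'' i / (∑ j ∈ S, v'' j) - v i / (∑ j ∈ S, v j)) * (∑ j ∈ S, v j) / v i) ≤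
      (∑ i ∈ S, (v i - v'' i)) / (∑ i ∈ S, v'' i) := by
  have hS : S.Nonempty := ⟨0, h0⟩
  have hv : ∀ i ∈ S, 0 < v i := fun i hi => (hv'' i hi).trans_le (hle i hi)
  have hva : ∀ i ∈ S, 0 < v i * a i := fun i hi => mul_pos (hv i hi) (ha i hi).1
  have hSv'' : 0 < ∑ i ∈ S, v'' i := sum_pos hv'' hS
  have hSv : 0 < ∑ i ∈ S, v i := sum_pos hv hS
  rw [sup'_share_gap_eq S hS v'' v hSv'' hSv fun i hi => (hv i hi).ne']
  set m := S.sup' hS fun i => v'' i / v i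
  set Sv := ∑ i ∈ S, v i
  set Sv'' := ∑ i ∈ S, v'' i
  set Sa := ∑ i ∈ S, v i * a i
  set Sa'' := ∑ i ∈ S, v'' i * a i
  constructor
  · have hratio : S.sup' hS (fun i => v'' i * a i / (v i * a i)) = m :=
      sup'_congr hS rfl fun i hi => mul_div_mul_right _ _ (ha i hi).1.ne'
    have hsum : Sa'' ≤ m * Sa := hratio ▸ sum_le_sup'_div_mul_sum S hS _ _ hva
    calc Sa'' / Sv'' * (Sv / Sa) - 1 = Sa'' / Sa * (Sv / Sv'') - 1 := by ring
      _ ≤ m * (Sv / Sv'') - 1 := by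
          gcongr
          exact (div_le_iff₀ (sum_pos hva hS)).2 hsum
  · have hm : m ≤ 1 := sup'_le hS _ fun i hi => div_le_one_of_le₀ (hle i hi) (hv i hi).le
    calc m * (Sv / Sv'') - 1 ≤ 1 * (Sv / Sv'') - 1 := by gcongr
      _ = (∑ i ∈ S, (v i - v'' i)) / Sv'' := by
          rw [sum_sub_distrib, sub_div, div_self hSv''.ne', one_mul]

/-- Ratio bound between two MNL-type weighted averages: for a finite set `S` containing
`0`, values `a i ∈ (0, 1]` with `a 0 = 1`, and positive weights `v'' i ≤ v i`,
`(∑ v'' a / ∑ v'') * (∑ v / ∑ v a) - 1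
  ≤ max_{i ∈ S} (v'' i / ∑ v'' - v i / ∑ v) * (∑ v) / v i
  ≤ (∑ (v - v'')) / (∑ v'')`. -/
theorem ratio_bound_chain (S : Finset ℕ) (h0 : 0 ∈ S) (a v v'' : ℕ → ℝ)
    (ha : ∀ i ∈ S, 0 < a i ∧ a i ≤ 1) (ha0 : a 0 = 1)
    (hv'' : ∀ i ∈ S, 0 < v'' i) (hle : ∀ i ∈ S, v'' i ≤ v i) :
    ((∑ i ∈ S, v'' i * a i) / (∑ i ∈ S, v'' i)) *
        ((∑ i ∈ S, v i) / (∑ i ∈ S, v i * a i)) - 1 ≤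
      S.sup' ⟨0, h0⟩
        (fun i => (v'' i / (∑ j ∈ S, v'' j) - v i / (∑ j ∈ S, v j)) * (∑ j ∈ S, v j) / v i) ∧
    S.sup' ⟨0, h0⟩
        (fun i => (v'' i / (∑ j ∈ S, v'' j) - v i / (∑ j ∈ S, v j)) * (∑ j ∈ S, v j) / v i) ≤
      (∑ i ∈ S, (v i - v'' i)) / (∑ i ∈ S, v'' i) :=
  ratio_bound_chain_general S h0 a v v'' ha hv'' hle
end
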